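/- arXiv:2012.11054 — 2 statements merged into one kernel-verified Lean document; each statement's English description precedes it below -/
import Mathlib

section
/- Let T be a CKY tensor on a metric Lie algebra (g, ⟨·,·⟩) with associated dual vector ξ ≠ 0. Then ∇_ξ ξ = 0, where ∇ is the Levi-Civita connection. -/
open scoped RealInnerProductSpace

/-!
Put `u = v = x` in the CKY equation: `⟪(∇ₓT)x, w⟫ = |x|² θ(w) - ⟪x, w⟫ θ(x)`. Pairing with `w = Tx`
and using the skew-symmetry of `∇ₓ` and of `T` gives `⟪∇ₓx, T²x⟫ = -|x|² ⟪Tξ, x⟫`; for an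
eigenvector `x` of the symmetric operator `T²` the left side vanishes, so `Tξ` is orthogonal to an
eigenbasis and `Tξ = 0`. Then `x = ξ` gives `T(∇_ξ ξ) = 0`, and for any `x ∈ ker T`, `w = ξ` gives
`|x|² |ξ|² = ⟪x, ξ⟫²`. Applied to `x = ∇_ξ ξ`, which is orthogonal to `ξ`, this forces `∇_ξ ξ = 0`.
-/

section

variable {V : Type*} [NormedAddCommGroup V] [InnerProductSpace ℝ V]

theorem LinearMap.IsSymmetric.eq_zero_of_forall_eigenvector_inner_eq_zero
    [FiniteDimensional ℝ V] {S : V →ₗ[ℝ] V} (hS : S.IsSymmetric) {y : V}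
    (hy : ∀ (μ : ℝ) (x : V), S x = μ • x → ⟪y, x⟫ = 0) : y = 0 := by
  have hy' : y ∈ (⨆ μ, Module.End.eigenspace S μ)ᗮ := by
    rw [← Submodule.iInf_orthogonal, Submodule.mem_iInf]
    exact fun μ => (Submodule.mem_orthogonal' _ _).mpr
      fun x hx => hy μ x (Module.End.mem_eigenspace_iff.mp hx)
  rwa [hS.orthogonalComplement_iSup_eigenspaces_eq_bot, Submodule.mem_bot] at hy'

section Skew

variable {T : V →ₗ[ℝ] V}

theorem inner_self_apply_eq_zero_of_skew (hT : ∀ u v : V, ⟪T u, v⟫ = -⟪u, T v⟫) (x : V) :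
    ⟪x, T x⟫ = 0 := by
  linarith [hT x x, real_inner_comm (T x) x]

theorem isSymmetric_comp_self_of_skew (hT : ∀ u v : V, ⟪T u, v⟫ = -⟪u, T v⟫) :
    (T ∘ₗ T).IsSymmetric := by
  intro x y
  simp only [LinearMap.comp_apply, hT (T x) y, hT x (T y), neg_neg]

end Skew

theorem inner_koszul_apply_swap {lb D : V →ₗ[ℝ] V →ₗ[ℝ] V} (hlb : lb.IsAlt)
    (hD : ∀ u v w : V, 2 * ⟪D u v, w⟫ = ⟪lb u v, w⟫ - ⟪lb v w, u⟫ + ⟪lb w u, v⟫)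
    (x y z : V) : ⟪D x y, z⟫ = -⟪D x z, y⟫ := by
  have h := hD x z y
  rw [← hlb.neg z x, ← hlb.neg y z, ← hlb.neg x y] at h
  simp only [inner_neg_left] at h
  linarith [hD x y z]

/-- `T` is a conformal Killing–Yano tensor with dual vector `ξ`, where `D u v` stands for `∇ᵤv`
and `D u (T v) - T (D u v)` for `(∇ᵤT)v`. -/
def IsCKY (D : V →ₗ[ℝ] V →ₗ[ℝ] V) (T : V →ₗ[ℝ] V) (ξ : V) : Prop :=
  ∀ u v w : V, ⟪D u (T v) - T (D u v), w⟫ + ⟪D v (T u) - T (D v u), w⟫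
    = 2 * ⟪u, v⟫ * ⟪ξ, w⟫ - ⟪v, w⟫ * ⟪ξ, u⟫ - ⟪u, w⟫ * ⟪ξ, v⟫

namespace IsCKY

variable {D : V →ₗ[ℝ] V →ₗ[ℝ] V} {T : V →ₗ[ℝ] V} {ξ : V} (hT : IsCKY D T ξ)
include hT

theorem inner_diag (x w : V) :
    ⟪D x (T x) - T (D x x), w⟫ = ⟪x, x⟫ * ⟪ξ, w⟫ - ⟪x, w⟫ * ⟪ξ, x⟫ := by
  linarith [hT x x w]

theorem inner_apply_self_comp_self (hDskew : ∀ x y z : V, ⟪D x y, z⟫ = -⟪D x z, y⟫)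
    (hTskew : ∀ u v : V, ⟪T u, v⟫ = -⟪u, T v⟫) (x : V) :
    ⟪D x x, T (T x)⟫ = -(⟪x, x⟫ * ⟪T ξ, x⟫) := by
  have hTx : ⟪D x (T x), T x⟫ = 0 := by linarith [hDskew x (T x) (T x)]
  have h := hT.inner_diag x (T x)
  rw [inner_sub_left, hTx, inner_self_apply_eq_zero_of_skew hTskew x, hTskew (D x x) (T x)] at h
  rw [hTskew ξ x]
  linarith

theorem apply_xi_eq_zero [FiniteDimensional ℝ V]
    (hDskew : ∀ x y z : V, ⟪D x y, z⟫ = -⟪D x z, y⟫)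
    (hTskew : ∀ u v : V, ⟪T u, v⟫ = -⟪u, T v⟫) : T ξ = 0 := by
  refine (isSymmetric_comp_self_of_skew hTskew).eq_zero_of_forall_eigenvector_inner_eq_zero
    fun μ x hx => ?_
  have hself : ⟪D x x, x⟫ = 0 := by linarith [hDskew x x x]
  have h := hT.inner_apply_self_comp_self hDskew hTskew x
  rw [← LinearMap.comp_apply, hx, inner_smul_right, hself] at h
  obtain hx0 | hTξx := mul_eq_zero.mp (by linarith : ⟪x, x⟫ * ⟪T ξ, x⟫ = 0)
  · rw [inner_self_eq_zero.mp hx0, inner_zero_right]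
  · exact hTξx

theorem apply_D_xi_xi_eq_zero (hTξ : T ξ = 0) : T (D ξ ξ) = 0 := by
  refine (inner_self_eq_zero (𝕜 := ℝ)).mp ?_
  have h := hT.inner_diag ξ (T (D ξ ξ))
  rw [hTξ, map_zero, zero_sub, inner_neg_left] at h
  linarith

theorem inner_self_mul_inner_xi_xi_eq_sq (hTskew : ∀ u v : V, ⟪T u, v⟫ = -⟪u, T v⟫)
    (hTξ : T ξ = 0) {x : V} (hx : T x = 0) : ⟪x, x⟫ * ⟪ξ, ξ⟫ = ⟪x, ξ⟫ ^ 2 := by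
  have h := hT.inner_diag x ξ
  rw [hx, map_zero, zero_sub, inner_neg_left, hTskew, hTξ, inner_zero_right,
    real_inner_comm x ξ] at h
  linarith

end IsCKY

end

theorem cky_nabla_xi_xi_eq_zero_general
    {V : Type*} [NormedAddCommGroup V] [InnerProductSpace ℝ V] [FiniteDimensional ℝ V]
    (lb : V →ₗ[ℝ] V →ₗ[ℝ] V)
    (hanti : ∀ u : V, lb u u = 0)
    (D : V →ₗ[ℝ] V →ₗ[ℝ] V)
    (hD : ∀ u v w : V, 2 * ⟪D u v, w⟫ = ⟪lb u v, w⟫ - ⟪lb v w, u⟫ + ⟪lb w u, v⟫)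
    (T : V →ₗ[ℝ] V)
    (hTskew : ∀ u v : V, ⟪T u, v⟫ = -⟪u, T v⟫)
    (ξ : V) (hξ : ξ ≠ 0)
    (hCKY : ∀ u v w : V,
      ⟪D u (T v) - T (D u v), w⟫ + ⟪D v (T u) - T (D v u), w⟫
        = 2 * ⟪u, v⟫ * ⟪ξ, w⟫ - ⟪v, w⟫ * ⟪ξ, u⟫ - ⟪u, w⟫ * ⟪ξ, v⟫) :
    D ξ ξ = 0 := by
  have hT : IsCKY D T ξ := hCKY
  have hDskew := inner_koszul_apply_swap hanti hD
  have hTξ := hT.apply_xi_eq_zero hDskew hTskew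
  have horth : ⟪D ξ ξ, ξ⟫ = 0 := by linarith [hDskew ξ ξ ξ]
  have h := hT.inner_self_mul_inner_xi_xi_eq_sq hTskew hTξ (hT.apply_D_xi_xi_eq_zero hTξ)
  rw [horth, zero_pow two_ne_zero] at h
  obtain h | h := mul_eq_zero.mp h
  · exact inner_self_eq_zero.mp h
  · exact absurd (inner_self_eq_zero.mp h) hξ

/-- If `T` is a CKY tensor with nonzero dual vector `ξ`, then
`∇_ξ ξ = 0` for the Levi-Civita connection. -/
theorem cky_nabla_xi_xi_eq_zero
    {V : Type*} [NormedAddCommGroup V] [InnerProductSpace ℝ V] [FiniteDimensional ℝ V]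
    (lb : V →ₗ[ℝ] V →ₗ[ℝ] V)
    (hanti : ∀ u : V, lb u u = 0)
    (hjac : ∀ u v w : V, lb u (lb v w) + lb v (lb w u) + lb w (lb u v) = 0)
    (D : V →ₗ[ℝ] V →ₗ[ℝ] V)
    (hD : ∀ u v w : V, 2 * ⟪D u v, w⟫ = ⟪lb u v, w⟫ - ⟪lb v w, u⟫ + ⟪lb w u, v⟫)
    (T : V →ₗ[ℝ] V)
    (hTskew : ∀ u v : V, ⟪T u, v⟫ = -⟪u, T v⟫)
    (ξ : V) (hξ : ξ ≠ 0)
    (hCKY : ∀ u v w : V,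
      ⟪D u (T v) - T (D u v), w⟫ + ⟪D v (T u) - T (D v u), w⟫
        = 2 * ⟪u, v⟫ * ⟪ξ, w⟫ - ⟪v, w⟫ * ⟪ξ, u⟫ - ⟪u, w⟫ * ⟪ξ, v⟫) :
    D ξ ξ = 0 :=
  cky_nabla_xi_xi_eq_zero_general lb hanti D hD T hTskew ξ hξ hCKY
end

section
/- Let (g_{r,s}, ⟨·,·⟩) be the 5-dimensional metric Lie algebra with orthonormal basis {ξ, z₁, z₂, x, y} and brackets [ξ,x] = r z₁ + a₄ y, [ξ,y] = r z₂ − a₄ x, [x,y] = s ξ, r,s > 0, a₄ = (s²−r²)/s. Then every Killing-Yano tensor on (g_{r,s}, ⟨·,·⟩) is zero. In particular, (g_{r,s}, ⟨·,·⟩) admits no nonzero parallel skew-symmetric tensor. -/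
open scoped RealInnerProductSpace

noncomputable abbrev V5 : Type := EuclideanSpace ℝ (Fin 5)

/-- standard orthonormal basis `{ξ, z₁, z₂, x, y} = {e 0, e 1, e 2, e 3, e 4}`. -/
noncomputable abbrev e (i : Fin 5) : V5 := EuclideanSpace.single i (1 : ℝ)

/-!
Evaluate the Killing–Yano condition `⟪(∇_u T) v + (∇_v T) u, w⟫ = 0` at `u = ξ` and basis vectors
`v, w`. By the Koszul formula each instance is a linear equation in the entries `⟪T eᵢ, eⱼ⟫`
with coefficients in `r, s, a₄`, and ten of them, solved successively for
`T₀₃, T₀₄, T₀₁, T₀₂, T₁₃, T₂₄, T₃₄, T₁₄, T₂₃, T₁₂`, kill every entry above the diagonal as soon as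
`r, s ≠ 0`. Skew-symmetry does the rest, and a parallel tensor is in particular Killing–Yano.
-/

section KillingYano

variable {E : Type*} [NormedAddCommGroup E] [InnerProductSpace ℝ E]

def IsSkew (T : E →ₗ[ℝ] E) : Prop :=
  ∀ u v, ⟪T u, v⟫ = -⟪u, T v⟫

def covDeriv (D : E →ₗ[ℝ] E →ₗ[ℝ] E) (T : E →ₗ[ℝ] E) (u : E) : E →ₗ[ℝ] E :=
  D u ∘ₗ T - T ∘ₗ D u

def IsKillingYano (D : E →ₗ[ℝ] E →ₗ[ℝ] E) (T : E →ₗ[ℝ] E) : Prop :=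
  ∀ u v w, ⟪covDeriv D T u v, w⟫ + ⟪covDeriv D T v u, w⟫ = 0

def IsParallel (D : E →ₗ[ℝ] E →ₗ[ℝ] E) (T : E →ₗ[ℝ] E) : Prop :=
  ∀ u, covDeriv D T u = 0

variable {D : E →ₗ[ℝ] E →ₗ[ℝ] E} {T : E →ₗ[ℝ] E}

theorem IsParallel.isKillingYano (h : IsParallel D T) : IsKillingYano D T := by
  intro u v w
  simp [h u, h v]

theorem IsSkew.inner_self_eq_zero (hT : IsSkew T) (x : E) : ⟪T x, x⟫ = 0 := by
  have h := hT x x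
  rw [real_inner_comm (T x) x] at h
  linarith

theorem IsSkew.eq_zero_of_inner_basis_lt {ι : Type*} [LinearOrder ι] (b : Module.Basis ι ℝ E)
    (hT : IsSkew T) (h : ∀ i j, i < j → ⟪T (b i), b j⟫ = 0) : T = 0 := by
  refine b.ext fun i => InnerProductSpace.ext_inner_right_basis b fun j => ?_
  rw [LinearMap.zero_apply, inner_zero_left]
  rcases lt_trichotomy i j with hij | rfl | hji
  · exact h i j hij
  · exact hT.inner_self_eq_zero _
  · rw [hT, real_inner_comm, h j i hji, neg_zero]

theorem IsKillingYano.inner_eq_zero (hKY : IsKillingYano D T) (hT : IsSkew T) (u v w : E) :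
    ⟪D u (T v), w⟫ + ⟪D u v, T w⟫ + ⟪D v (T u), w⟫ + ⟪D v u, T w⟫ = 0 := by
  have h := hKY u v w
  simp only [covDeriv, LinearMap.sub_apply, LinearMap.comp_apply, inner_sub_left, hT _ w] at h
  linarith

end KillingYano

section Grs

/-- `grsForm r s a v w z = ⟪[v, w], z⟫` on `g_{r,s}`, with `a` in the role of `a₄`. -/
def grsForm (r s a : ℝ) (v w z : V5) : ℝ :=
  (v 0 * w 3 - v 3 * w 0) * (r * z 1 + a * z 4)
  + (v 0 * w 4 - v 4 * w 0) * (r * z 2 - a * z 3)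
  + (v 3 * w 4 - v 4 * w 3) * (s * z 0)

structure IsGrsBracket (r s a : ℝ) (lb : V5 →ₗ[ℝ] V5 →ₗ[ℝ] V5) : Prop where
  isAlt : lb.IsAlt
  apply_e0_e3 : lb (e 0) (e 3) = r • e 1 + a • e 4
  apply_e0_e4 : lb (e 0) (e 4) = r • e 2 - a • e 3
  apply_e3_e4 : lb (e 3) (e 4) = s • e 0
  apply_e0_e1 : lb (e 0) (e 1) = 0
  apply_e0_e2 : lb (e 0) (e 2) = 0
  apply_e1_e2 : lb (e 1) (e 2) = 0
  apply_e1_e3 : lb (e 1) (e 3) = 0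
  apply_e1_e4 : lb (e 1) (e 4) = 0
  apply_e2_e3 : lb (e 2) (e 3) = 0
  apply_e2_e4 : lb (e 2) (e 4) = 0

theorem V5.eq_sum (v : V5) : v = v 0 • e 0 + v 1 • e 1 + v 2 • e 2 + v 3 • e 3 + v 4 • e 4 := by
  ext i
  fin_cases i <;> simp [e]

theorem e_apply (i j : Fin 5) : e i j = if j = i then 1 else 0 :=
  PiLp.single_apply _ _ _ _ _

theorem inner_e_left (i : Fin 5) (v : V5) : ⟪e i, v⟫ = v i := by
  simp [e, EuclideanSpace.inner_single_left]

theorem inner_e_right (v : V5) (i : Fin 5) : ⟪v, e i⟫ = v i := by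
  simp [e, EuclideanSpace.inner_single_right]

variable {r s a : ℝ} {lb D : V5 →ₗ[ℝ] V5 →ₗ[ℝ] V5} {T : V5 →ₗ[ℝ] V5}

theorem IsGrsBracket.inner_apply (h : IsGrsBracket r s a lb) (v w z : V5) :
    ⟪lb v w, z⟫ = grsForm r s a v w z := by
  have swap (i j : Fin 5) : lb (e j) (e i) = -lb (e i) (e j) := (h.isAlt.neg _ _).symm
  conv_lhs => rw [v.eq_sum, w.eq_sum]
  simp only [map_add, map_smul, LinearMap.add_apply, LinearMap.smul_apply, swap 0 1, swap 0 2,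
    swap 0 3, swap 0 4, swap 1 2, swap 1 3, swap 1 4, swap 2 3, swap 2 4, swap 3 4, h.isAlt _,
    h.apply_e0_e3, h.apply_e0_e4, h.apply_e3_e4, h.apply_e0_e1, h.apply_e0_e2, h.apply_e1_e2,
    h.apply_e1_e3, h.apply_e1_e4, h.apply_e2_e3, h.apply_e2_e4, neg_zero, smul_zero, add_zero,
    zero_add, inner_add_left, inner_sub_left, inner_neg_left, real_inner_smul_left, inner_e_left,
    grsForm]
  ring

theorem eq_zero_of_isKillingYano (hr : r ≠ 0) (hs : s ≠ 0)
    (hD : ∀ u v w, ⟪D u v, w⟫ =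
      (grsForm r s a u v w - grsForm r s a v w u + grsForm r s a w u v) / 2)
    (hT : IsSkew T) (hKY : IsKillingYano D T) : T = 0 := by
  have key (j k : Fin 5) := hKY.inner_eq_zero hT (e 0) (e j) (e k)
  have E1 := key 0 1
  have E2 := key 0 2
  have E3 := key 0 3
  have E4 := key 0 4
  have E11 := key 1 1
  have E22 := key 2 2
  have E33 := key 3 3
  have E43 := key 4 3
  have E34 := key 3 4
  have E14 := key 1 4
  simp only [hD, grsForm, e_apply, Fin.reduceEq, ↓reduceIte]
    at E1 E2 E3 E4 E11 E22 E33 E43 E34 E14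
  ring_nf at E1 E2 E3 E4 E11 E22 E33 E43 E34 E14
  have skew (i j : Fin 5) : T (e j) i = -T (e i) j := by
    have h := hT (e j) (e i)
    rwa [inner_e_right, real_inner_comm, inner_e_right] at h
  have diag (i : Fin 5) : T (e i) i = 0 := by linarith [skew i i]
  simp only [diag] at E43 E34
  have h03 : T (e 0) 3 = 0 := (mul_eq_zero_iff_left hr).1 (by linear_combination E1)
  have h04 : T (e 0) 4 = 0 := (mul_eq_zero_iff_left hr).1 (by linear_combination E2)
  have h01 : T (e 0) 1 = 0 :=
    (mul_eq_zero_iff_left hr).1 (by linear_combination -E3 + (s - 2 * a) * h04)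
  have h02 : T (e 0) 2 = 0 :=
    (mul_eq_zero_iff_left hr).1 (by linear_combination -E4 + (2 * a - s) * h03)
  have h13 : T (e 1) 3 = 0 := (mul_eq_zero_iff_left hr).1 (by linear_combination -2 * E11)
  have h24 : T (e 2) 4 = 0 := (mul_eq_zero_iff_left hr).1 (by linear_combination -2 * E22)
  have h34 : T (e 3) 4 = 0 :=
    (mul_eq_zero_iff_left hs).1 (by linear_combination -2 * E33 - r * skew 1 3 + r * h13)
  have h14 : T (e 1) 4 = 0 :=
    (mul_eq_zero_iff_left hr).1 (by linear_combination 2 * E43 + r * skew 1 4)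
  have h23 : T (e 2) 3 = 0 :=
    (mul_eq_zero_iff_left hr).1 (by linear_combination 2 * E34 + r * skew 2 3)
  have h12 : T (e 1) 2 = 0 := (mul_eq_zero_iff_left hr).1 (by
    linear_combination -2 * E14 + (2 * a - s) * h13 - 2 * r * skew 3 4 + 2 * r * h34)
  refine hT.eq_zero_of_inner_basis_lt (EuclideanSpace.basisFun (Fin 5) ℝ).toBasis
    fun i j hij => ?_
  simp only [OrthonormalBasis.coe_toBasis, EuclideanSpace.basisFun_apply, inner_e_right]
  fin_cases i <;> fin_cases j <;> first | exact absurd hij (by decide) | assumption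

end Grs

theorem grs_no_nonzero_KY_general
    (r s : ℝ) (hr : 0 < r) (hs : 0 < s)
    (lb : V5 →ₗ[ℝ] V5 →ₗ[ℝ] V5)
    (hanti : ∀ u : V5, lb u u = 0)
    (hb1 : lb (e 0) (e 3) = r • e 1 + ((s^2 - r^2)/s) • e 4)
    (hb2 : lb (e 0) (e 4) = r • e 2 - ((s^2 - r^2)/s) • e 3)
    (hb3 : lb (e 3) (e 4) = s • e 0)
    (hb4 : lb (e 0) (e 1) = 0) (hb5 : lb (e 0) (e 2) = 0)
    (hb6 : lb (e 1) (e 2) = 0) (hb7 : lb (e 1) (e 3) = 0)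
    (hb8 : lb (e 1) (e 4) = 0) (hb9 : lb (e 2) (e 3) = 0)
    (hb10 : lb (e 2) (e 4) = 0)
    (D : V5 →ₗ[ℝ] V5 →ₗ[ℝ] V5)
    (hD : ∀ u v w : V5, 2 * ⟪D u v, w⟫ = ⟪lb u v, w⟫ - ⟪lb v w, u⟫ + ⟪lb w u, v⟫) :
    (∀ T : V5 →ₗ[ℝ] V5, (∀ u v : V5, ⟪T u, v⟫ = -⟪u, T v⟫) →
      (∀ u v w : V5, ⟪D u (T v) - T (D u v), w⟫ + ⟪D v (T u) - T (D v u), w⟫ = 0) →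
      T = 0) ∧
    (∀ T : V5 →ₗ[ℝ] V5, (∀ u v : V5, ⟪T u, v⟫ = -⟪u, T v⟫) →
      (∀ u v : V5, D u (T v) - T (D u v) = 0) → T = 0) := by
  have hlb : IsGrsBracket r s ((s^2 - r^2)/s) lb :=
    ⟨hanti, hb1, hb2, hb3, hb4, hb5, hb6, hb7, hb8, hb9, hb10⟩
  have hKoszul (u v w : V5) : ⟪D u v, w⟫ = (grsForm r s ((s^2 - r^2)/s) u v w
      - grsForm r s ((s^2 - r^2)/s) v w u + grsForm r s ((s^2 - r^2)/s) w u v) / 2 := by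
    rw [← hlb.inner_apply, ← hlb.inner_apply, ← hlb.inner_apply, ← hD]
    ring
  have ky_eq_zero (T : V5 →ₗ[ℝ] V5) (hT : IsSkew T) (hKY : IsKillingYano D T) : T = 0 :=
    eq_zero_of_isKillingYano hr.ne' hs.ne' hKoszul hT hKY
  exact ⟨ky_eq_zero, fun T hT hpar =>
    ky_eq_zero T hT (IsParallel.isKillingYano fun u => LinearMap.ext (hpar u))⟩

/-- on the metric Lie algebra `g_{r,s}`, every Killing-Yano tensor
is zero; in particular there is no nonzero parallel skew-symmetric tensor. -/
theorem grs_no_nonzero_KY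
    (r s : ℝ) (hr : 0 < r) (hs : 0 < s)
    (lb : V5 →ₗ[ℝ] V5 →ₗ[ℝ] V5)
    (hanti : ∀ u : V5, lb u u = 0)
    (hjac : ∀ u v w : V5, lb u (lb v w) + lb v (lb w u) + lb w (lb u v) = 0)
    (hb1 : lb (e 0) (e 3) = r • e 1 + ((s^2 - r^2)/s) • e 4)
    (hb2 : lb (e 0) (e 4) = r • e 2 - ((s^2 - r^2)/s) • e 3)
    (hb3 : lb (e 3) (e 4) = s • e 0)
    (hb4 : lb (e 0) (e 1) = 0) (hb5 : lb (e 0) (e 2) = 0)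
    (hb6 : lb (e 1) (e 2) = 0) (hb7 : lb (e 1) (e 3) = 0)
    (hb8 : lb (e 1) (e 4) = 0) (hb9 : lb (e 2) (e 3) = 0)
    (hb10 : lb (e 2) (e 4) = 0)
    (D : V5 →ₗ[ℝ] V5 →ₗ[ℝ] V5)
    (hD : ∀ u v w : V5, 2 * ⟪D u v, w⟫ = ⟪lb u v, w⟫ - ⟪lb v w, u⟫ + ⟪lb w u, v⟫) :
    (∀ T : V5 →ₗ[ℝ] V5, (∀ u v : V5, ⟪T u, v⟫ = -⟪u, T v⟫) →
      (∀ u v w : V5, ⟪D u (T v) - T (D u v), w⟫ + ⟪D v (T u) - T (D v u), w⟫ = 0) →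
      T = 0) ∧
    (∀ T : V5 →ₗ[ℝ] V5, (∀ u v : V5, ⟪T u, v⟫ = -⟪u, T v⟫) →
      (∀ u v : V5, D u (T v) - T (D u v) = 0) → T = 0) :=
  grs_no_nonzero_KY_general r s hr hs lb hanti hb1 hb2 hb3 hb4 hb5 hb6 hb7 hb8 hb9 hb10 D hD
end
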